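/- In an n-restricted combinatorial horoball H_n(Λ), any horizontal segment of a geodesic of length at least 6 must be contained in the top level Λ × {n}. -/

import Mathlib

/-- The combinatorial horoball based on a graph `Λ`: vertices are `Λ⁰ × ℕ`,
vertical edges join `(v,n)` to `(v,n+1)`, horizontal edges join `(v,n)` to `(w,n)`
whenever `0 < d_Λ(v,w) ≤ 2^n`. -/
def horoball {V : Type*} (Λ : SimpleGraph V) : SimpleGraph (V × ℕ) where
  Adj a b := (a.1 = b.1 ∧ (a.2 + 1 = b.2 ∨ b.2 + 1 = a.2)) ∨
    (a.2 = b.2 ∧ a.1 ≠ b.1 ∧ Λ.dist a.1 b.1 ≤ 2 ^ a.2)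
  symm := ⟨by
    rintro ⟨x, m⟩ ⟨y, k⟩ (⟨h1, h2⟩ | ⟨h1, h2, h3⟩)
    · exact Or.inl ⟨h1.symm, h2.symm⟩
    · exact Or.inr ⟨h1.symm, h2.symm, by rwa [SimpleGraph.dist_comm, ← h1]⟩⟩
  loopless := ⟨by
    rintro ⟨x, m⟩ (⟨_, h⟩ | ⟨_, h, _⟩) <;> simp_all⟩

/-- The level-`n` subgraph of the combinatorial horoball on `Λ`, identified with a graph
on the vertices of `Λ`: it is the Rips graph `Rips_{2^n}(Λ)`, whose edges join distinct
vertices at `Λ`-distance at most `2^n`. -/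
def ripsLevel {V : Type*} (Λ : SimpleGraph V) (n : ℕ) : SimpleGraph V where
  Adj v w := v ≠ w ∧ Λ.dist v w ≤ 2 ^ n
  symm := ⟨fun v w h => ⟨h.1.symm, by rw [SimpleGraph.dist_comm]; exact h.2⟩⟩
  loopless := ⟨fun v h => h.1 rfl⟩

/-- The `n`-restricted horoball `H_n(Λ)`: the full subgraph of the combinatorial
horoball on the levels `0` through `n`. -/
def restrictedHoroball {V : Type*} (Λ : SimpleGraph V) (n : ℕ) :
    SimpleGraph {p : V × ℕ // p ∈ {q : V × ℕ | q.2 ≤ n}} :=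
  SimpleGraph.induce {q : V × ℕ | q.2 ≤ n} (horoball Λ)

/-!
If six consecutive edges of a geodesic lie at a level `m < n`, their endpoints `x₀, …, x₆` satisfy
`d_Λ(xⱼ, xⱼ₊₁) ≤ 2^m`, hence `d_Λ(xⱼ, xⱼ₊₂) ≤ 2^(m+1)`. Climbing to level `m + 1`, crossing with
the three horizontal edges `x₀x₂, x₂x₄, x₄x₆` there and descending again joins the ends of the
segment by a path of length `5 < 6`, which is impossible on a geodesic.
-/

namespace SimpleGraph.Walk

variable {V : Type*} {G : SimpleGraph V} {u v : V}

theorem sub_le_dist_getVert_of_length_eq_dist (w : G.Walk u v) (hw : w.length = G.dist u v)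
    {i j : ℕ} (hj : j ≤ w.length) : j - i ≤ G.dist (w.getVert i) (w.getVert j) := by
  have hu : G.dist u v ≤ G.dist u (w.getVert i) + G.dist (w.getVert i) v :=
    (w.take i).reachable.dist_triangle_left v
  have hv :
      G.dist (w.getVert i) v ≤ G.dist (w.getVert i) (w.getVert j) + G.dist (w.getVert j) v :=
    (w.drop j).reachable.dist_triangle_right _
  have hi : G.dist u (w.getVert i) ≤ i := (dist_le (w.take i)).trans (by simp)
  have hj' : G.dist (w.getVert j) v ≤ w.length - j := (dist_le (w.drop j)).trans (by simp)
  omega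

end SimpleGraph.Walk

section RestrictedHoroball

open SimpleGraph

variable {V : Type*} {Λ : SimpleGraph V} {n : ℕ}

theorem restrictedHoroball_adj_iff_ripsLevel_adj {x y : V} {k : ℕ} (hk : k ≤ n) :
    (restrictedHoroball Λ n).Adj ⟨(x, k), hk⟩ ⟨(y, k), hk⟩ ↔ (ripsLevel Λ k).Adj x y := by
  simp [restrictedHoroball, horoball, ripsLevel]

theorem restrictedHoroball_adj_succ (x : V) {k : ℕ} (hk : k + 1 ≤ n) :
    (restrictedHoroball Λ n).Adj ⟨(x, k), Nat.le_of_succ_le hk⟩ ⟨(x, k + 1), hk⟩ :=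
  Or.inl ⟨rfl, Or.inl rfl⟩

theorem restrictedHoroball_dist_le_one {x y : V} {k : ℕ} (hk : k ≤ n)
    (hxy : Λ.dist x y ≤ 2 ^ k) : (restrictedHoroball Λ n).dist ⟨(x, k), hk⟩ ⟨(y, k), hk⟩ ≤ 1 := by
  rcases eq_or_ne x y with rfl | hne
  · simp
  · exact (dist_eq_one_iff_adj.mpr
      ((restrictedHoroball_adj_iff_ripsLevel_adj hk).mpr ⟨hne, hxy⟩)).le

theorem restrictedHoroball_reachable_level_zero (x : V) {k : ℕ} (hk : k ≤ n) :
    (restrictedHoroball Λ n).Reachable ⟨(x, 0), Nat.zero_le n⟩ ⟨(x, k), hk⟩ := by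
  induction k with
  | zero => rfl
  | succ k ih => exact (ih _).trans (restrictedHoroball_adj_succ (Λ := Λ) x hk).reachable

def restrictedHoroballLevelZeroHom (Λ : SimpleGraph V) (n : ℕ) : Λ →g restrictedHoroball Λ n where
  toFun x := ⟨(x, 0), Nat.zero_le n⟩
  map_rel' h := (restrictedHoroball_adj_iff_ripsLevel_adj _).mpr
    ⟨h.ne, (dist_eq_one_iff_adj.mpr h).le⟩

theorem restrictedHoroball_connected (hΛ : Λ.Connected) (n : ℕ) :
    (restrictedHoroball Λ n).Connected := by
  have := hΛ.nonempty.map (restrictedHoroballLevelZeroHom Λ n)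
  refine ⟨fun ⟨(x, k), hk⟩ ⟨(y, l), hl⟩ => ?_⟩
  exact (restrictedHoroball_reachable_level_zero x hk).symm.trans
    (((hΛ.preconnected x y).map (restrictedHoroballLevelZeroHom Λ n)).trans
      (restrictedHoroball_reachable_level_zero y hl))

theorem restrictedHoroball_dist_le_dist_succ_add_two (hΛ : Λ.Connected) (x y : V) {k : ℕ}
    (hk : k + 1 ≤ n) :
    (restrictedHoroball Λ n).dist ⟨(x, k), Nat.le_of_succ_le hk⟩ ⟨(y, k), Nat.le_of_succ_le hk⟩ ≤
      (restrictedHoroball Λ n).dist ⟨(x, k + 1), hk⟩ ⟨(y, k + 1), hk⟩ + 2 := by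
  have hconn := restrictedHoroball_connected hΛ n
  have hx := dist_eq_one_iff_adj.mpr (restrictedHoroball_adj_succ (Λ := Λ) x hk)
  have hy := dist_eq_one_iff_adj.mpr (restrictedHoroball_adj_succ (Λ := Λ) y hk).symm
  have h1 := hconn.dist_triangle (u := ⟨(x, k), Nat.le_of_succ_le hk⟩) (v := ⟨(x, k + 1), hk⟩)
    (w := ⟨(y, k), Nat.le_of_succ_le hk⟩)
  have h2 := hconn.dist_triangle (u := ⟨(x, k + 1), hk⟩) (v := ⟨(y, k + 1), hk⟩)
    (w := ⟨(y, k), Nat.le_of_succ_le hk⟩)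
  omega

theorem restrictedHoroball_dist_le_five (hΛ : Λ.Connected) {k : ℕ} (hk : k + 1 ≤ n)
    {x₀ x₁ x₂ x₃ : V} (h₀₁ : Λ.dist x₀ x₁ ≤ 2 ^ (k + 1)) (h₁₂ : Λ.dist x₁ x₂ ≤ 2 ^ (k + 1))
    (h₂₃ : Λ.dist x₂ x₃ ≤ 2 ^ (k + 1)) :
    (restrictedHoroball Λ n).dist ⟨(x₀, k), Nat.le_of_succ_le hk⟩ ⟨(x₃, k), Nat.le_of_succ_le hk⟩ ≤
      5 := by
  have hconn := restrictedHoroball_connected hΛ n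
  calc _ ≤ (restrictedHoroball Λ n).dist ⟨(x₀, k + 1), hk⟩ ⟨(x₃, k + 1), hk⟩ + 2 :=
        restrictedHoroball_dist_le_dist_succ_add_two hΛ _ _ hk
    _ ≤ (restrictedHoroball Λ n).dist ⟨(x₀, k + 1), hk⟩ ⟨(x₁, k + 1), hk⟩ +
        (restrictedHoroball Λ n).dist ⟨(x₁, k + 1), hk⟩ ⟨(x₂, k + 1), hk⟩ +
        (restrictedHoroball Λ n).dist ⟨(x₂, k + 1), hk⟩ ⟨(x₃, k + 1), hk⟩ + 2 := by
        grw [hconn.dist_triangle (v := ⟨(x₂, k + 1), hk⟩),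
          hconn.dist_triangle (v := ⟨(x₁, k + 1), hk⟩)]
    _ ≤ 1 + 1 + 1 + 2 := by
        grw [restrictedHoroball_dist_le_one hk h₀₁, restrictedHoroball_dist_le_one hk h₁₂,
          restrictedHoroball_dist_le_one hk h₂₃]

end RestrictedHoroball

/-- In an `n`-restricted horoball, any horizontal segment of a geodesic of length at
least `6` is contained in the top level `Λ × {n}`: if seven consecutive vertices of a
geodesic walk all lie at the same level `m` (so that the six edges between them are
horizontal), then `m = n`. -/
theorem restrictedHoroball_long_horizontal_top {V : Type*} (Λ : SimpleGraph V)
    (hΛ : Λ.Connected) (n : ℕ) {a b : {q : V × ℕ // q ∈ {q : V × ℕ | q.2 ≤ n}}}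
    (w : (restrictedHoroball Λ n).Walk a b)
    (hgeo : w.length = (restrictedHoroball Λ n).dist a b)
    (i m : ℕ) (hi : i + 6 ≤ w.length)
    (hlev : ∀ j : ℕ, i ≤ j → j ≤ i + 6 → ((w.getVert j : V × ℕ)).2 = m) :
    m = n := by
  by_contra hmn
  have hm : m + 1 ≤ n :=
    Nat.lt_of_le_of_ne (hlev i le_rfl (by omega) ▸ (w.getVert i).2 : m ≤ n) hmn
  obtain ⟨x, hx⟩ : ∃ x : ℕ → V, ∀ j ≤ 6,
      w.getVert (i + j) = ⟨(x j, m), Nat.le_of_succ_le hm⟩ :=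
    ⟨fun j => (w.getVert (i + j)).1.1,
      fun j hj => Subtype.ext (Prod.ext rfl (hlev _ (by omega) (by omega)))⟩
  have hstep (j : ℕ) (hj : j < 6) : Λ.dist (x j) (x (j + 1)) ≤ 2 ^ m := by
    have h := w.adj_getVert_succ (i := i + j) (by omega)
    rw [hx j hj.le, show i + j + 1 = i + (j + 1) from rfl, hx (j + 1) hj] at h
    exact ((restrictedHoroball_adj_iff_ripsLevel_adj _).mp h).2
  have hhop (j : ℕ) (hj : j < 5) : Λ.dist (x j) (x (j + 2)) ≤ 2 ^ (m + 1) :=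
    calc Λ.dist (x j) (x (j + 2)) ≤ Λ.dist (x j) (x (j + 1)) + Λ.dist (x (j + 1)) (x (j + 2)) :=
          hΛ.dist_triangle
      _ ≤ 2 ^ m + 2 ^ m := add_le_add (hstep j (by omega)) (hstep (j + 1) (by omega))
      _ = 2 ^ (m + 1) := by ring
  have hshort : (restrictedHoroball Λ n).dist (w.getVert i) (w.getVert (i + 6)) ≤ 5 := by
    rw [show w.getVert i = _ from hx 0 (by omega), hx 6 le_rfl]
    exact restrictedHoroball_dist_le_five hΛ hm (hhop 0 (by omega)) (hhop 2 (by omega))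
      (hhop 4 (by omega))
  have hlong := w.sub_le_dist_getVert_of_length_eq_dist hgeo (i := i) hi
  omega
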